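/- Suppose G ⊆ ℝ^d contains two unit cubes C and C' = C + a with a ∈ ℤ^d, a ≠ 0, and G admits an integer self-affine tiling with matrix M^n and digit set D_n whose elements are pairwise incongruent modulo M^n ℤ^d, such that each tile M^{−n}(G + s), s ∈ D_n, has diameter < 1 and the tile containing the corner vertex u of C is T = M^{−n}(G + s_1) while the tile containing u + a is T' = M^{−n}(G + s_2) with T' = T + a. Then s_2 − s_1 = M^n a, contradicting s_1 ≢ s_2 (mod M^n ℤ^d) when s_1 ≠ s_2; hence a polyhedral integer attractor that is a disjoint union of at least two integer unit cubes cannot exist. -/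
import Mathlib

private lemma sSup_image_add_const (s : Set ℝ) (hs : s.Nonempty) (hb : BddAbove s) (c : ℝ) :
    sSup ((fun t => t + c) '' s) = sSup s + c :=
  (Monotone.map_csSup_of_continuousAt (continuousAt_id.add continuousAt_const)
    (fun _ _ h => by simpa using add_le_add_right h c) hs hb).symm

private lemma translate_eq_vec {d : ℕ} {S : Set (Fin d → ℝ)} (hne : S.Nonempty)
    (hc : IsCompact S) {v w : Fin d → ℝ}
    (h : (fun x => x + v) '' S = (fun x => x + w) '' S) : v = w := by
  funext i
  have key : ∀ u : Fin d → ℝ,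
      sSup ((fun x : Fin d → ℝ => x i) '' ((fun x => x + u) '' S)) =
      sSup ((fun x : Fin d → ℝ => x i) '' S) + u i := by
    intro u
    rw [Set.image_image]
    have h1 : (fun x : Fin d → ℝ => (x + u) i) '' S
        = (fun t => t + u i) '' ((fun x : Fin d → ℝ => x i) '' S) := by
      rw [Set.image_image]; rfl
    rw [h1, sSup_image_add_const _ (hne.image _)
      ((hc.image (continuous_apply i)).bddAbove)]
  have h2 := congrArg (fun A : Set (Fin d → ℝ) => sSup ((fun x : Fin d → ℝ => x i) '' A)) h
  simp only [key] at h2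
  linarith

/-- The algebraic core of Theorem 2: if the tile T' containing u + a equals
T + a, with T = M^{-n}(G + s₁) and T' = M^{-n}(G + s₂) for digits s₁, s₂ that
are incongruent mod M^n ℤ^d unless equal, and a ≠ 0, we reach a contradiction;
hence a polyhedral integer attractor cannot contain two distinct unit cubes. -/
theorem stmt_16 {d : ℕ} (M : Matrix (Fin d) (Fin d) ℤ)
    (hdet : (M.map (fun k : ℤ => (k : ℝ))).det ≠ 0)
    (n : ℕ) (G T T' : Set (Fin d → ℝ)) (hGne : G.Nonempty) (hGc : IsCompact G)
    (s₁ s₂ a : Fin d → ℤ) (ha : a ≠ 0)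
    (hT : T = (fun x => ((M.map (fun k : ℤ => (k : ℝ))) ^ n)⁻¹.mulVec x) ''
      ((fun x => x + fun i => (s₁ i : ℝ)) '' G))
    (hT' : T' = (fun x => ((M.map (fun k : ℤ => (k : ℝ))) ^ n)⁻¹.mulVec x) ''
      ((fun x => x + fun i => (s₂ i : ℝ)) '' G))
    (hTa : T' = (fun x => x + fun i => (a i : ℝ)) '' T)
    (hincong : ∀ z : Fin d → ℤ, s₂ - s₁ = (M ^ n).mulVec z → s₂ = s₁) :
    False := by
  set A : Matrix (Fin d) (Fin d) ℝ := (M.map (fun k : ℤ => (k : ℝ))) ^ n with hA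
  have hAdet : IsUnit A.det := by
    rw [hA, Matrix.det_pow]
    exact isUnit_iff_ne_zero.2 (pow_ne_zero n hdet)
  set S : Set (Fin d → ℝ) := (fun x => A⁻¹.mulVec x) '' G with hS
  have hScont : Continuous fun x : Fin d → ℝ => A⁻¹.mulVec x :=
    LinearMap.continuous_of_finiteDimensional (Matrix.mulVecLin A⁻¹)
  have hSc : IsCompact S := hGc.image hScont
  have hSne : S.Nonempty := hGne.image _
  have himg : ∀ s : Fin d → ℝ,
      (fun x => A⁻¹.mulVec x) '' ((fun x => x + s) '' G)
        = (fun x => x + A⁻¹.mulVec s) '' S := by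
    intro s
    rw [hS, Set.image_image, Set.image_image]
    refine Set.image_congr' (fun x => ?_)
    simp [Matrix.mulVec_add]
  subst hT; subst hT'
  rw [himg, himg] at hTa
  have hT'2 : (fun x => x + A⁻¹.mulVec fun i => (s₂ i : ℝ)) '' S
      = (fun x => x + ((A⁻¹.mulVec fun i => (s₁ i : ℝ)) + fun i => (a i : ℝ))) '' S := by
    rw [hTa, Set.image_image]
    refine Set.image_congr' (fun x => ?_)
    rw [add_assoc]
  have hvec := translate_eq_vec hSne hSc hT'2
  -- multiply by A
  have hmul : ∀ v : Fin d → ℝ, A.mulVec (A⁻¹.mulVec v) = v := by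
    intro v
    rw [Matrix.mulVec_mulVec, Matrix.mul_nonsing_inv _ hAdet, Matrix.one_mulVec]
  have h3 : (fun i => (s₂ i : ℝ)) =
      (fun i => (s₁ i : ℝ)) + A.mulVec (fun i => (a i : ℝ)) := by
    have := congrArg A.mulVec hvec
    rwa [hmul, Matrix.mulVec_add, hmul] at this
  have hApow : A = (M ^ n).map (Int.castRingHom ℝ) := by
    rw [hA, show (M.map fun k : ℤ => (k : ℝ)) = (Int.castRingHom ℝ).mapMatrix M from rfl,
      ← map_pow, RingHom.mapMatrix_apply]
  have hcast : A.mulVec (fun i => (a i : ℝ)) = fun i => (((M ^ n).mulVec a i : ℤ) : ℝ) := by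
    funext i
    rw [hApow]
    exact (RingHom.map_mulVec (Int.castRingHom ℝ) (M ^ n) a i).symm
  have hz : s₂ - s₁ = (M ^ n).mulVec a := by
    funext i
    have := congrFun h3 i
    rw [hcast] at this
    have h4 : ((s₂ i : ℝ)) = (s₁ i : ℝ) + (((M ^ n).mulVec a i : ℤ) : ℝ) := this
    have h5 : ((s₂ i : ℝ)) - (s₁ i : ℝ) = (((M ^ n).mulVec a i : ℤ) : ℝ) := by linarith
    simp only [Pi.sub_apply]
    exact_mod_cast h5
  have hs12 := hincong a hz
  rw [hs12, sub_self] at hz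
  have haR : (fun i => (a i : ℝ)) = 0 := by
    have h0 : A.mulVec (fun i => (a i : ℝ)) = 0 := by
      rw [hcast, ← hz]
      funext i; simp
    have := congrArg A⁻¹.mulVec h0
    rwa [Matrix.mulVec_mulVec, Matrix.nonsing_inv_mul _ hAdet, Matrix.one_mulVec,
      Matrix.mulVec_zero] at this
  apply ha
  funext i
  have h6 := congrFun haR i
  simp only [Pi.zero_apply] at h6 ⊢
  exact_mod_cast h6
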